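/- arXiv:2209.02027 — 5 statements merged into one kernel-verified Lean document; each statement's English description precedes it below -/
import Mathlib

section
/- For every hyperbolic matrix M ∈ Sp(2n,ℤ) (and in fact every M ∈ Sp(2n,ℤ)), there exists a unique vector φ_M ∈ {0,1}^{2n} such that Q(M⁻¹w) − Q(w) ≡ σ(φ_M, w) (mod 2ℤ) for all w ∈ ℤ^{2n}. -/
open Matrix BigOperators

/-- The standard symplectic bilinear form `σ((q,p),(q',p')) = ⟨p,q'⟩ − ⟨p',q⟩` on `ℤ^{2n}`,
where a vector `x : Fin n ⊕ Fin n → ℤ` has `q`-coordinates `x (Sum.inl i)` and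
`p`-coordinates `x (Sum.inr i)`. -/
def sigmaZ (n : ℕ) (x y : Fin n ⊕ Fin n → ℤ) : ℤ :=
  (∑ i : Fin n, x (Sum.inr i) * y (Sum.inl i)) - ∑ i : Fin n, y (Sum.inr i) * x (Sum.inl i)

/-- `Q((q,p)) = ⟨q,p⟩`. -/
def QZ (n : ℕ) (x : Fin n ⊕ Fin n → ℤ) : ℤ :=
  ∑ i : Fin n, x (Sum.inl i) * x (Sum.inr i)

/-- An integer `2n × 2n` matrix is symplectic if it preserves the standard symplectic
bilinear form (equivalently, its real extension preserves `σ` on all of `ℝ^{2n}`). -/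
def IsSymplecticZ (n : ℕ) (M : Matrix (Fin n ⊕ Fin n) (Fin n ⊕ Fin n) ℤ) : Prop :=
  ∀ x y : Fin n ⊕ Fin n → ℤ, sigmaZ n (M.mulVec x) (M.mulVec y) = sigmaZ n x y

/-!
Modulo 2 we have `Q(u + v) ≡ Q(u) + Q(v) + σ(u, v)`, so for a symplectic `A` the cross terms of
`Q(Ax + Ay)` and `Q(x + y)` agree and the parity of `Q(Aw) − Q(w)` is an additive map
`g : ℤ^{2n} → ℤ/2`. Modulo 2 the form `σ(φ, w)` is the pairing `∑ⱼ φ(swap j) wⱼ`, which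
represents each such `g` by exactly one `φ ∈ {0,1}^{2n}`, namely `φⱼ = g(e_{swap j})`.
-/

lemma AddMonoidHom.apply_eq_sum_smul_single {ι M : Type*} [Fintype ι] [DecidableEq ι]
    [AddCommGroup M] (g : (ι → ℤ) →+ M) (w : ι → ℤ) :
    g w = ∑ j, w j • g (Pi.single j 1) := by
  conv_lhs => rw [← Finset.univ_sum_single w, map_sum]
  refine Finset.sum_congr rfl fun j _ => ?_
  rw [← map_zsmul, ← Pi.single_smul', smul_eq_mul, mul_one]

lemma eq_of_intCast_zmod_two_eq {a b : ℤ} (ha : a = 0 ∨ a = 1) (hb : b = 0 ∨ b = 1)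
    (h : (a : ZMod 2) = b) : a = b := by
  rcases ha with rfl | rfl <;> rcases hb with rfl | rfl <;> simp_all

variable {n : ℕ}

lemma IsSymplecticZ.of_mul_eq_one {M Minv : Matrix (Fin n ⊕ Fin n) (Fin n ⊕ Fin n) ℤ}
    (hM : IsSymplecticZ n M) (h : M * Minv = 1) : IsSymplecticZ n Minv := by
  intro x y
  simpa [mulVec_mulVec, h] using (hM (Minv *ᵥ x) (Minv *ᵥ y)).symm

lemma QZ_add (u v : Fin n ⊕ Fin n → ℤ) :
    QZ n (u + v) = QZ n u + QZ n v + sigmaZ n u v + 2 * ∑ i, u (Sum.inl i) * v (Sum.inr i) := by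
  simp only [QZ, sigmaZ, Pi.add_apply, Finset.mul_sum, ← Finset.sum_sub_distrib,
    ← Finset.sum_add_distrib]
  exact Finset.sum_congr rfl fun _ _ => by ring

lemma intCast_QZ_add (u v : Fin n ⊕ Fin n → ℤ) :
    (QZ n (u + v) : ZMod 2) = QZ n u + QZ n v + sigmaZ n u v := by
  rw [QZ_add]
  push_cast
  rw [show (2 : ZMod 2) = 0 from rfl]
  ring

lemma intCast_sigmaZ (φ w : Fin n ⊕ Fin n → ℤ) :
    (sigmaZ n φ w : ZMod 2) = ∑ j, (φ j.swap : ZMod 2) * w j := by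
  simp only [sigmaZ, Fintype.sum_sum_type, Sum.swap_inl, Sum.swap_inr]
  push_cast
  rw [sub_eq_add_neg, ← Finset.sum_neg_distrib]
  simp only [ZMod.neg_eq_self_mod_two, mul_comm]

lemma intCast_sigmaZ_single_swap (φ : Fin n ⊕ Fin n → ℤ) (j : Fin n ⊕ Fin n) :
    (sigmaZ n φ (Pi.single j.swap 1) : ZMod 2) = φ j := by
  simp [intCast_sigmaZ, Pi.single_apply]

def IsSymplecticZ.defectModTwo {A : Matrix (Fin n ⊕ Fin n) (Fin n ⊕ Fin n) ℤ}
    (hA : IsSymplecticZ n A) : (Fin n ⊕ Fin n → ℤ) →+ ZMod 2 :=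
  AddMonoidHom.mk' (fun w => ((QZ n (A *ᵥ w) - QZ n w : ℤ) : ZMod 2)) fun x y => by
    push_cast
    rw [mulVec_add, intCast_QZ_add, intCast_QZ_add, hA]
    ring

theorem existsUnique_intCast_sigmaZ_eq (g : (Fin n ⊕ Fin n → ℤ) →+ ZMod 2) :
    ∃! φ : Fin n ⊕ Fin n → ℤ, (∀ i, φ i = 0 ∨ φ i = 1) ∧ ∀ w, (sigmaZ n φ w : ZMod 2) = g w := by
  set φ : Fin n ⊕ Fin n → ℤ := fun j => (g (Pi.single j.swap 1)).val
  have hφ01 (j : Fin n ⊕ Fin n) : φ j = 0 ∨ φ j = 1 := by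
    have := ZMod.val_lt (g (Pi.single j.swap 1))
    simp only [φ]
    omega
  refine ⟨φ, ⟨hφ01, fun w => ?_⟩, ?_⟩
  · simp [φ, intCast_sigmaZ, g.apply_eq_sum_smul_single w, mul_comm]
  · rintro ψ ⟨hψ01, hψ⟩
    funext j
    refine eq_of_intCast_zmod_two_eq (hψ01 j) (hφ01 j) ?_
    rw [← intCast_sigmaZ_single_swap, hψ]
    simp [φ]

theorem exists_unique_phi_general (n : ℕ) (M Minv : Matrix (Fin n ⊕ Fin n) (Fin n ⊕ Fin n) ℤ)
    (hM : IsSymplecticZ n M) (hMinv₁ : M * Minv = 1) :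
    ∃! φ : Fin n ⊕ Fin n → ℤ, (∀ i, φ i = 0 ∨ φ i = 1) ∧
      ∀ w : Fin n ⊕ Fin n → ℤ,
        (2 : ℤ) ∣ (QZ n (Minv.mulVec w) - QZ n w - sigmaZ n φ w) := by
  refine (existsUnique_congr fun φ => and_congr_right fun _ => forall_congr' fun w => ?_).mp
    (existsUnique_intCast_sigmaZ_eq (hM.of_mul_eq_one hMinv₁).defectModTwo)
  exact ZMod.intCast_eq_intCast_iff_dvd_sub _ _ 2

/-- for every `M ∈ Sp(2n,ℤ)` (with inverse `Minv`), there is a unique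
`φ_M ∈ {0,1}^{2n}` such that `Q(M⁻¹w) − Q(w) ≡ σ(φ_M, w) (mod 2ℤ)` for all `w ∈ ℤ^{2n}`. -/
theorem exists_unique_phi (n : ℕ) (M Minv : Matrix (Fin n ⊕ Fin n) (Fin n ⊕ Fin n) ℤ)
    (hM : IsSymplecticZ n M) (hMinv₁ : M * Minv = 1) (hMinv₂ : Minv * M = 1) :
    ∃! φ : Fin n ⊕ Fin n → ℤ, (∀ i, φ i = 0 ∨ φ i = 1) ∧
      ∀ w : Fin n ⊕ Fin n → ℤ,
        (2 : ℤ) ∣ (QZ n (Minv.mulVec w) - QZ n w - sigmaZ n φ w) :=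
  exists_unique_phi_general n M Minv hM hMinv₁
end

section
/- For every M ∈ Sp(2n,ℤ), one has φ_{M⁻¹} ≡ M⁻¹ φ_M (mod (2ℤ)^{2n}), i.e., every coordinate of φ_{M⁻¹} − M⁻¹φ_M is an even integer. -/
open Matrix BigOperators

lemma sigmaZ_add_left (n : ℕ) (a b w : Fin n ⊕ Fin n → ℤ) :
    sigmaZ n (a + b) w = sigmaZ n a w + sigmaZ n b w := by
  simp [sigmaZ, add_mul, mul_add, Finset.sum_add_distrib]
  ring

lemma sigmaZ_single_inl (n : ℕ) (x : Fin n ⊕ Fin n → ℤ) (j : Fin n) :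
    sigmaZ n x (Pi.single (Sum.inl j) 1) = x (Sum.inr j) := by
  simp [sigmaZ, Pi.single_apply, mul_ite, ite_mul]

lemma sigmaZ_single_inr (n : ℕ) (x : Fin n ⊕ Fin n → ℤ) (j : Fin n) :
    sigmaZ n x (Pi.single (Sum.inr j) 1) = -x (Sum.inl j) := by
  simp [sigmaZ, Pi.single_apply, mul_ite, ite_mul]

/-- `φ_{M⁻¹} ≡ M⁻¹ φ_M (mod (2ℤ)^{2n})`, i.e. every coordinate of
`φ_{M⁻¹} − M⁻¹ φ_M` is an even integer.  Here `φM` (resp. `φMinv`) is the unique element of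
`{0,1}^{2n}` characterizing `M` (resp. `M⁻¹ = Minv`) via `Q(M⁻¹w) − Q(w) ≡ σ(φ_M, w) (mod 2)`. -/
theorem phi_inv (n : ℕ) (M Minv : Matrix (Fin n ⊕ Fin n) (Fin n ⊕ Fin n) ℤ)
    (hM : IsSymplecticZ n M) (hMinv₁ : M * Minv = 1) (hMinv₂ : Minv * M = 1)
    (φM φMinv : Fin n ⊕ Fin n → ℤ)
    (hφM01 : ∀ i, φM i = 0 ∨ φM i = 1)
    (hφM : ∀ w : Fin n ⊕ Fin n → ℤ,
      (2 : ℤ) ∣ (QZ n (Minv.mulVec w) - QZ n w - sigmaZ n φM w))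
    (hφMinv01 : ∀ i, φMinv i = 0 ∨ φMinv i = 1)
    (hφMinv : ∀ w : Fin n ⊕ Fin n → ℤ,
      (2 : ℤ) ∣ (QZ n (M.mulVec w) - QZ n w - sigmaZ n φMinv w)) :
    ∀ i, (2 : ℤ) ∣ (φMinv i - Minv.mulVec φM i) := by
  set u : Fin n ⊕ Fin n → ℤ := M.mulVec φMinv + φM with hu
  have hsig : ∀ w, (2 : ℤ) ∣ sigmaZ n u w := by
    intro w
    have h1 := hφM w
    have h2 := hφMinv (Minv.mulVec w)
    rw [Matrix.mulVec_mulVec, hMinv₁, Matrix.one_mulVec] at h2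
    have h3 := hM φMinv (Minv.mulVec w)
    rw [Matrix.mulVec_mulVec, hMinv₁, Matrix.one_mulVec] at h3
    have hkey : sigmaZ n u w =
        -((QZ n (Minv.mulVec w) - QZ n w - sigmaZ n φM w)
          + (QZ n w - QZ n (Minv.mulVec w) - sigmaZ n φMinv (Minv.mulVec w))) := by
      rw [hu, sigmaZ_add_left, h3]; ring
    rw [hkey]
    exact (dvd_add h1 h2).neg_right
  have hcoord : ∀ i, (2 : ℤ) ∣ u i := by
    intro i
    cases i with
    | inl j =>
      have h := hsig (Pi.single (Sum.inr j) 1)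
      rw [sigmaZ_single_inr] at h
      exact (dvd_neg.mp h)
    | inr j =>
      have h := hsig (Pi.single (Sum.inl j) 1)
      rw [sigmaZ_single_inl] at h
      exact h
  have hMu : ∀ i, (2 : ℤ) ∣ (Minv.mulVec u) i := by
    intro i
    simp only [Matrix.mulVec, dotProduct]
    exact Finset.dvd_sum fun j _ => (hcoord j).mul_left _
  have heq : Minv.mulVec u = φMinv + Minv.mulVec φM := by
    rw [hu, Matrix.mulVec_add, Matrix.mulVec_mulVec, hMinv₂, Matrix.one_mulVec]
  intro i
  have h := hMu i
  rw [heq] at h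
  simp only [Pi.add_apply] at h
  omega
end

section
/- Let M ∈ Sp(2n,ℤ) be written in n×n blocks as M = [[A,B],[C,D]]. Then for every w = (m, m') ∈ ℤⁿ×ℤⁿ one has Q(M⁻¹w) − Q(w) ≡ ⟨CDᵀ m, m⟩ + ⟨ABᵀ m', m'⟩ (mod 2ℤ). Consequently, if every entry of the integer matrices CDᵀ and ABᵀ is even, then φ_M = 0. -/
open Matrix BigOperators

def Jmat (n : ℕ) : Matrix (Fin n ⊕ Fin n) (Fin n ⊕ Fin n) ℤ :=
  Matrix.fromBlocks 0 (-1) 1 0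

lemma sigma_eq (n : ℕ) (x y : Fin n ⊕ Fin n → ℤ) :
    sigmaZ n x y = x ⬝ᵥ ((Jmat n) *ᵥ y) := by
  simp only [sigmaZ, Jmat, dotProduct, Matrix.fromBlocks_mulVec, Fintype.sum_sum_type,
    Matrix.neg_mulVec, Matrix.one_mulVec, Matrix.zero_mulVec, Pi.add_apply, Pi.neg_apply,
    Sum.elim_inl, Sum.elim_inr, Function.comp_apply, zero_add, add_zero]
  rw [sub_eq_add_neg, ← Finset.sum_neg_distrib, add_comm]
  congr 1 <;> { apply Finset.sum_congr rfl; intro i _; ring }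

lemma mat_ext {n : ℕ} (N N' : Matrix (Fin n ⊕ Fin n) (Fin n ⊕ Fin n) ℤ)
    (h : ∀ x y, x ⬝ᵥ (N *ᵥ y) = x ⬝ᵥ (N' *ᵥ y)) : N = N' := by
  ext i j
  have := h (Pi.single i 1) (Pi.single j 1)
  simpa [Matrix.mulVec_single, single_dotProduct] using this

lemma dot_trans {m : Type*} [Fintype m] (N : Matrix m m ℤ) (a b : m → ℤ) :
    a ⬝ᵥ (N *ᵥ b) = (Nᵀ *ᵥ a) ⬝ᵥ b := by
  rw [Matrix.dotProduct_mulVec, Matrix.mulVec_transpose]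

lemma key_dot {n : ℕ} (P Q : Matrix (Fin n) (Fin n) ℤ) (a b : Fin n → ℤ) :
    (Pᵀ *ᵥ a) ⬝ᵥ (Qᵀ *ᵥ b) = a ⬝ᵥ ((P * Qᵀ) *ᵥ b) := by
  rw [Matrix.mulVec_transpose, ← Matrix.dotProduct_mulVec, Matrix.mulVec_mulVec]

lemma minv_eq {n : ℕ} (M Minv : Matrix (Fin n ⊕ Fin n) (Fin n ⊕ Fin n) ℤ)
    (hM : ∀ x y, sigmaZ n (M.mulVec x) (M.mulVec y) = sigmaZ n x y)
    (hMinv₁ : M * Minv = 1) :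
    Minv = Matrix.fromBlocks M.toBlocks₂₂ᵀ (-M.toBlocks₁₂ᵀ) (-M.toBlocks₂₁ᵀ) M.toBlocks₁₁ᵀ
    ∧ M * Jmat n * Mᵀ = Jmat n := by
  have hJJ : Jmat n * Jmat n = -1 := by
    rw [Jmat, Matrix.fromBlocks_multiply, ← Matrix.fromBlocks_one, Matrix.fromBlocks_neg,
      neg_zero]
    norm_num
  have hJ : Mᵀ * Jmat n * M = Jmat n := by
    apply mat_ext
    intro x y
    have h := hM x y
    rw [sigma_eq, sigma_eq] at h
    rw [← h]
    rw [Matrix.dotProduct_mulVec x, Matrix.mulVec_mulVec, Matrix.dotProduct_mulVec (M *ᵥ x),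
      show M *ᵥ x = x ᵥ* Mᵀ from (Matrix.vecMul_transpose M x).symm, Matrix.vecMul_vecMul,
      Matrix.mul_assoc]
  have hL : (-(Jmat n * Mᵀ * Jmat n)) * M = 1 := by
    have h2 : Jmat n * (Mᵀ * Jmat n * M) = Jmat n * Jmat n := by rw [hJ]
    rw [hJJ] at h2
    calc (-(Jmat n * Mᵀ * Jmat n)) * M = -(Jmat n * (Mᵀ * Jmat n * M)) := by noncomm_ring
    _ = 1 := by rw [h2]; simp
  have hMinv : Minv = -(Jmat n * Mᵀ * Jmat n) := by
    calc Minv = 1 * Minv := (one_mul _).symm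
    _ = (-(Jmat n * Mᵀ * Jmat n) * M) * Minv := by rw [hL]
    _ = -(Jmat n * Mᵀ * Jmat n) * (M * Minv) := by rw [Matrix.mul_assoc]
    _ = -(Jmat n * Mᵀ * Jmat n) := by rw [hMinv₁, Matrix.mul_one]
  constructor
  · rw [hMinv]
    nth_rewrite 1 [← Matrix.fromBlocks_toBlocks M]
    rw [Matrix.fromBlocks_transpose]
    simp [Jmat, Matrix.fromBlocks_multiply, Matrix.fromBlocks_neg]
  · -- M * J * Mᵀ = J
    have h1 : M * (-(Jmat n * Mᵀ * Jmat n)) = 1 := by rw [← hMinv, hMinv₁]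
    have h2 : -(M * Jmat n * Mᵀ * Jmat n) = 1 := by rw [← h1]; noncomm_ring
    have h4 : M * Jmat n * Mᵀ * (Jmat n * Jmat n) = -Jmat n := by
      calc M * Jmat n * Mᵀ * (Jmat n * Jmat n) = -(-(M * Jmat n * Mᵀ * Jmat n) * Jmat n) := by
            noncomm_ring
      _ = -(1 * Jmat n) := by rw [h2]
      _ = -Jmat n := by rw [one_mul]
    rw [hJJ] at h4
    simpa [Matrix.mul_neg] using h4

lemma QZ_elim {n : ℕ} (a b : Fin n → ℤ) : QZ n (Sum.elim a b) = a ⬝ᵥ b := rfl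

lemma dvd_quad {n : ℕ} (N : Matrix (Fin n) (Fin n) ℤ) (hN : ∀ i j, (2:ℤ) ∣ N i j)
    (m : Fin n → ℤ) : (2:ℤ) ∣ ∑ i, N.mulVec m i * m i := by
  apply Finset.dvd_sum
  intro i _
  apply Dvd.dvd.mul_right
  show (2:ℤ) ∣ ∑ j, N i j * m j
  exact Finset.dvd_sum fun j _ => Dvd.dvd.mul_right (hN i j) _

/-- writing `M = [[A,B],[C,D]]` in `n×n` blocks, for every `w = (m,m') ∈ ℤⁿ×ℤⁿ`
one has `Q(M⁻¹w) − Q(w) ≡ ⟨CDᵀm, m⟩ + ⟨ABᵀm', m'⟩ (mod 2ℤ)`; consequently, if every entry of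
`CDᵀ` and of `ABᵀ` is even, then `φ_M = 0` (i.e. the unique `φ ∈ {0,1}^{2n}` with
`Q(M⁻¹w) − Q(w) ≡ σ(φ,w) (mod 2)` is the zero vector). -/
theorem phi_blocks (n : ℕ) (M Minv : Matrix (Fin n ⊕ Fin n) (Fin n ⊕ Fin n) ℤ)
    (hM : IsSymplecticZ n M) (hMinv₁ : M * Minv = 1) (hMinv₂ : Minv * M = 1) :
    (∀ m m' : Fin n → ℤ,
      (2 : ℤ) ∣ (QZ n (Minv.mulVec (Sum.elim m m')) - QZ n (Sum.elim m m')
        - ((∑ i : Fin n, (M.toBlocks₂₁ * M.toBlocks₂₂ᵀ).mulVec m i * m i)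
          + ∑ i : Fin n, (M.toBlocks₁₁ * M.toBlocks₁₂ᵀ).mulVec m' i * m' i))) ∧
    ((∀ i j : Fin n, (2 : ℤ) ∣ (M.toBlocks₂₁ * M.toBlocks₂₂ᵀ) i j) →
     (∀ i j : Fin n, (2 : ℤ) ∣ (M.toBlocks₁₁ * M.toBlocks₁₂ᵀ) i j) →
     ∀ φ : Fin n ⊕ Fin n → ℤ, (∀ i, φ i = 0 ∨ φ i = 1) →
       (∀ w : Fin n ⊕ Fin n → ℤ,
         (2 : ℤ) ∣ (QZ n (Minv.mulVec w) - QZ n w - sigmaZ n φ w)) →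
       φ = 0) := by
  obtain ⟨hInv, hMJ⟩ := minv_eq M Minv hM hMinv₁
  set A := M.toBlocks₁₁ with hA
  set B := M.toBlocks₁₂ with hB
  set C := M.toBlocks₂₁ with hC
  set D := M.toBlocks₂₂ with hD
  -- block identities from M J Mᵀ = J
  have hblk : Matrix.fromBlocks (B * Aᵀ - A * Bᵀ) (B * Cᵀ - A * Dᵀ)
      (D * Aᵀ - C * Bᵀ) (D * Cᵀ - C * Dᵀ) = Matrix.fromBlocks 0 (-1) 1 0 := by
    rw [show Matrix.fromBlocks 0 (-1) 1 0 = Jmat n from rfl, ← hMJ,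
      ← Matrix.fromBlocks_toBlocks M, Matrix.fromBlocks_transpose, Jmat,
      Matrix.fromBlocks_multiply, Matrix.fromBlocks_multiply, ← hA, ← hB, ← hC, ← hD]
    congr 1 <;> noncomm_ring
  have hBA : B * Aᵀ = A * Bᵀ := by
    have := congrArg Matrix.toBlocks₁₁ hblk
    simp only [Matrix.toBlocks_fromBlocks₁₁] at this
    linear_combination (norm := noncomm_ring) this
  have hDC : D * Cᵀ = C * Dᵀ := by
    have := congrArg Matrix.toBlocks₂₂ hblk
    simp only [Matrix.toBlocks_fromBlocks₂₂] at this
    linear_combination (norm := noncomm_ring) this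
  have hDA : D * Aᵀ = 1 + C * Bᵀ := by
    have := congrArg Matrix.toBlocks₂₁ hblk
    simp only [Matrix.toBlocks_fromBlocks₂₁] at this
    linear_combination (norm := noncomm_ring) this
  have key : ∀ m m' : Fin n → ℤ,
      QZ n (Minv.mulVec (Sum.elim m m')) - QZ n (Sum.elim m m')
        - ((∑ i : Fin n, (C * Dᵀ).mulVec m i * m i)
          + ∑ i : Fin n, (A * Bᵀ).mulVec m' i * m' i)
      = 2 * (m ⬝ᵥ ((C * Bᵀ) *ᵥ m') - m ⬝ᵥ ((C * Dᵀ) *ᵥ m) - m' ⬝ᵥ ((A * Bᵀ) *ᵥ m')) := by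
    intro m m'
    have e1 : m ⬝ᵥ ((D * Cᵀ) *ᵥ m) = m ⬝ᵥ ((C * Dᵀ) *ᵥ m) := by rw [hDC]
    have e2 : m ⬝ᵥ ((D * Aᵀ) *ᵥ m') = m ⬝ᵥ m' + m ⬝ᵥ ((C * Bᵀ) *ᵥ m') := by
      rw [hDA, Matrix.add_mulVec, Matrix.one_mulVec, dotProduct_add]
    have e3 : m' ⬝ᵥ ((B * Aᵀ) *ᵥ m') = m' ⬝ᵥ ((A * Bᵀ) *ᵥ m') := by rw [hBA]
    have e4 : m' ⬝ᵥ ((B * Cᵀ) *ᵥ m) = m ⬝ᵥ ((C * Bᵀ) *ᵥ m') := by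
      rw [dot_trans, Matrix.transpose_mul, Matrix.transpose_transpose, dotProduct_comm]
    have expand : QZ n (Minv.mulVec (Sum.elim m m'))
        = -(m ⬝ᵥ ((D * Cᵀ) *ᵥ m)) + m ⬝ᵥ ((D * Aᵀ) *ᵥ m')
          + m' ⬝ᵥ ((B * Cᵀ) *ᵥ m) - m' ⬝ᵥ ((B * Aᵀ) *ᵥ m') := by
      rw [hInv, Matrix.fromBlocks_mulVec]
      simp only [Sum.elim_comp_inl, Sum.elim_comp_inr]
      rw [QZ_elim, Matrix.neg_mulVec, Matrix.neg_mulVec]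
      simp only [dotProduct_add, add_dotProduct, dotProduct_neg, neg_dotProduct, key_dot]
      ring
    have hq2 : QZ n (Sum.elim m m') = m ⬝ᵥ m' := rfl
    have hs1 : (∑ i : Fin n, (C * Dᵀ).mulVec m i * m i) = m ⬝ᵥ ((C * Dᵀ) *ᵥ m) :=
      dotProduct_comm _ _
    have hs2 : (∑ i : Fin n, (A * Bᵀ).mulVec m' i * m' i) = m' ⬝ᵥ ((A * Bᵀ) *ᵥ m') :=
      dotProduct_comm _ _
    rw [expand, hq2, hs1, hs2]
    linear_combination -e1 + e2 + e4 - e3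
  constructor
  · intro m m'
    exact ⟨_, key m m'⟩
  · intro hCD2 hAB2 φ hφ01 hφ
    have hsig : ∀ m m' : Fin n → ℤ, (2:ℤ) ∣ sigmaZ n φ (Sum.elim m m') := by
      intro m m'
      have h1 : (2:ℤ) ∣ QZ n (Minv.mulVec (Sum.elim m m')) - QZ n (Sum.elim m m') := by
        have hq := (⟨_, key m m'⟩ : (2:ℤ) ∣ _)
        have hd1 := dvd_quad (C * Dᵀ) hCD2 m
        have hd2 := dvd_quad (A * Bᵀ) hAB2 m'
        have := dvd_add hq (dvd_add hd1 hd2)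
        simpa using this
      have h2 := hφ (Sum.elim m m')
      have := dvd_sub h1 h2
      simpa using this
    funext i
    rcases i with j | j
    · have h := hsig 0 (Pi.single j 1)
      have hs : sigmaZ n φ (Sum.elim 0 (Pi.single j 1)) = -φ (Sum.inl j) := by
        simp [sigmaZ, Pi.single_apply, mul_comm]
      rw [hs, dvd_neg] at h
      rcases hφ01 (Sum.inl j) with h0 | h1
      · simpa using h0
      · rw [h1] at h; omega
    · have h := hsig (Pi.single j 1) 0
      have hs : sigmaZ n φ (Sum.elim (Pi.single j 1) 0) = φ (Sum.inr j) := by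
        simp [sigmaZ, Pi.single_apply, mul_comm]
      rw [hs] at h
      rcases hφ01 (Sum.inr j) with h0 | h1
      · simpa using h0
      · rw [h1] at h; omega
end

section
/- For every integer N ≥ 1, every θ = (θ₁,θ₂) ∈ ℝⁿ×ℝⁿ, every j ∈ ℤⁿ, and every w ∈ ℤ^{2n}, the Dirac comb e^θ_j satisfies the quasi-periodicity relation ρ_N(w, e^{πiQ(w)}) e^θ_j = e^{2πiσ(θ,w)} e^θ_j in 𝒮'(ℝⁿ); that is, e^θ_j belongs to the space H_{N,θ} of quasi-periodic distributions. -/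
open BigOperators

/-- The standard symplectic form `σ((q,p),(q',p')) = ⟨p,q'⟩ − ⟨p',q⟩` on
`ℝ^{2n} = ℝⁿ × ℝⁿ`, a point `x` being written as a pair `x = (q,p)`. -/
def sigmaR (n : ℕ) (x y : (Fin n → ℝ) × (Fin n → ℝ)) : ℝ :=
  (∑ i : Fin n, x.2 i * y.1 i) - ∑ i : Fin n, y.2 i * x.1 i

/-- `Q((q,p)) = ⟨q,p⟩`. -/
def QR (n : ℕ) (x : (Fin n → ℝ) × (Fin n → ℝ)) : ℝ :=
  ∑ i : Fin n, x.1 i * x.2 i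

/-- The Schrödinger representation operator:
`(ρ_N(x,ζ)f)(y) = ζ^N e^{2πiN(⟨p,y⟩ − ⟨q,p⟩/2)} f(y−q)` for `x = (q,p)`. -/
noncomputable def rho (n N : ℕ) (x : (Fin n → ℝ) × (Fin n → ℝ)) (ζ : ℂ)
    (f : (Fin n → ℝ) → ℂ) : (Fin n → ℝ) → ℂ :=
  fun y => ζ ^ N * Complex.exp (2 * Real.pi * Complex.I * (N : ℂ) *
      (((∑ i : Fin n, x.2 i * y i : ℝ) : ℂ) - ((QR n x : ℝ) : ℂ) / 2)) * f (y - x.1)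

/-- Coercion of an integer lattice point `w ∈ ℤ^{2n}` into `ℝ^{2n}`. -/
def castVec (n : ℕ) (w : (Fin n → ℤ) × (Fin n → ℤ)) : (Fin n → ℝ) × (Fin n → ℝ) :=
  (fun i => (w.1 i : ℝ), fun i => (w.2 i : ℝ))

/-- The pairing of the Dirac comb `e^θ_j` against a test function:
`e^θ_j(f) = N^{−n/2} Σ_{k∈ℤⁿ} e^{−2πi⟨θ₂,k⟩} f(k + (j−θ₁)/N)`. -/
noncomputable def comb (n N : ℕ) (θ : (Fin n → ℝ) × (Fin n → ℝ)) (j : Fin n → ℤ)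
    (f : (Fin n → ℝ) → ℂ) : ℂ :=
  (((N : ℝ) ^ (-(n : ℝ) / 2) : ℝ) : ℂ) *
    ∑' k : Fin n → ℤ,
      Complex.exp (-(2 * Real.pi * Complex.I) *
          ((∑ i : Fin n, θ.2 i * (k i : ℝ) : ℝ) : ℂ)) *
        f (fun i => (k i : ℝ) + ((j i : ℝ) - θ.1 i) / N)

/-- The transformed test function defining the dual action of `ρ_N(x,ζ)` on tempered
distributions by `(ρ_N(x,ζ)ν)(f) := ν(f̃)`, namely
`f̃(z) = ζ^N e^{2πiN(⟨p,z⟩ + ⟨q,p⟩/2)} f(z+q)` for `x = (q,p)`. -/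
noncomputable def rhoDualTest (n N : ℕ) (x : (Fin n → ℝ) × (Fin n → ℝ)) (ζ : ℂ)
    (f : (Fin n → ℝ) → ℂ) : (Fin n → ℝ) → ℂ :=
  fun z => ζ ^ N * Complex.exp (2 * Real.pi * Complex.I * (N : ℂ) *
      (((∑ i : Fin n, x.2 i * z i : ℝ) : ℂ) + ((QR n x : ℝ) : ℂ) / 2)) * f (z + x.1)

/-- for every `N ≥ 1`, `θ = (θ₁,θ₂)`, `j ∈ ℤⁿ` and `w ∈ ℤ^{2n}`, the Dirac comb
`e^θ_j` satisfies `ρ_N(w, e^{πiQ(w)}) e^θ_j = e^{2πiσ(θ,w)} e^θ_j` in `𝒮'(ℝⁿ)`; i.e. testing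
against any Schwartz function `f` gives `e^θ_j(f̃) = e^{2πiσ(θ,w)} e^θ_j(f)`.  In other words
`e^θ_j` belongs to the space `H_{N,θ}` of quasi-periodic distributions. -/
theorem comb_quasiPeriodic (n N : ℕ) (hN : 1 ≤ N)
    (θ : (Fin n → ℝ) × (Fin n → ℝ)) (j : Fin n → ℤ) (w : (Fin n → ℤ) × (Fin n → ℤ))
    (f : SchwartzMap ((Fin n) → ℝ) ℂ) :
    comb n N θ j
        (rhoDualTest n N (castVec n w)
          (Complex.exp (Real.pi * Complex.I * ((QR n (castVec n w) : ℝ) : ℂ))) f)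
      = Complex.exp (2 * Real.pi * Complex.I * ((sigmaR n θ (castVec n w) : ℝ) : ℂ))
        * comb n N θ j f := by
  have hNR : (N:ℝ) ≠ 0 := Nat.cast_ne_zero.mpr (by omega)
  set q := w.1 with hqdef
  set p := w.2 with hpdef
  simp only [comb, rhoDualTest, castVec, sigmaR, QR]
  conv_rhs => rw [mul_left_comm]
  congr 1
  rw [← tsum_mul_left]
  refine (tsum_congr fun k => ?_).trans
    ((Equiv.addRight q).tsum_eq (fun k =>
      Complex.exp (2 * Real.pi * Complex.I *
          ((((∑ i : Fin n, θ.2 i * (q i : ℝ)) - ∑ i : Fin n, (p i : ℝ) * θ.1 i : ℝ)) : ℂ)) *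
        (Complex.exp (-(2 * Real.pi * Complex.I) *
            ((∑ i : Fin n, θ.2 i * (k i : ℝ) : ℝ) : ℂ)) *
          f (fun i => (k i : ℝ) + ((j i : ℝ) - θ.1 i) / N))))
  simp only [Equiv.coe_addRight, Pi.add_apply]
  -- per-term identity
  have harg : ((fun i => (k i:ℝ) + ((j i:ℝ) - θ.1 i)/N) + (fun i => (q i:ℝ)))
      = fun i => ((k i + q i : ℤ):ℝ) + ((j i:ℝ) - θ.1 i)/N := by
    funext i
    simp only [Pi.add_apply]
    push_cast
    ring
  rw [harg]
  have hsum : (N:ℂ) * ∑ i : Fin n, (p i:ℂ) * ((k i:ℂ) + ((j i:ℂ) - (θ.1 i:ℂ))/(N:ℂ))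
      = (N:ℂ) * ∑ i : Fin n, (p i:ℂ)*(k i:ℂ)
        + (∑ i : Fin n, (p i:ℂ)*(j i:ℂ) - ∑ i : Fin n, (p i:ℂ)*(θ.1 i:ℂ)) := by
    have : (N:ℝ) * ∑ i : Fin n, (p i:ℝ) * ((k i:ℝ) + ((j i:ℝ) - θ.1 i)/N)
        = (N:ℝ) * ∑ i : Fin n, (p i:ℝ)*(k i:ℝ)
          + (∑ i : Fin n, (p i:ℝ)*(j i:ℝ) - ∑ i : Fin n, (p i:ℝ)*θ.1 i) := by
      rw [Finset.mul_sum, Finset.mul_sum, ← Finset.sum_sub_distrib, ← Finset.sum_add_distrib]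
      apply Finset.sum_congr rfl
      intro i _
      field_simp
    exact_mod_cast this
  have hθ : (∑ i : Fin n, (θ.2 i:ℂ) * ((k i:ℂ) + (q i:ℂ)))
      = ∑ i : Fin n, (θ.2 i:ℂ)*(k i:ℂ) + ∑ i : Fin n, (θ.2 i:ℂ)*(q i:ℂ) := by
    rw [← Finset.sum_add_distrib]
    exact Finset.sum_congr rfl fun i _ => by ring
  have key : Complex.exp (-(2 * Real.pi * Complex.I) *
          ((∑ i : Fin n, θ.2 i * (k i : ℝ) : ℝ) : ℂ)) *
        (Complex.exp (Real.pi * Complex.I *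
            ((∑ i : Fin n, (q i:ℝ) * (p i:ℝ) : ℝ) : ℂ)) ^ N *
          Complex.exp (2 * Real.pi * Complex.I * (N : ℂ) *
            (((∑ i : Fin n, (p i:ℝ) * ((k i:ℝ) + ((j i:ℝ) - θ.1 i)/N) : ℝ) : ℂ)
              + ((∑ i : Fin n, (q i:ℝ) * (p i:ℝ) : ℝ) : ℂ) / 2)))
      = Complex.exp (2 * Real.pi * Complex.I *
          ((((∑ i : Fin n, θ.2 i * (q i : ℝ)) - ∑ i : Fin n, (p i : ℝ) * θ.1 i : ℝ)) : ℂ)) *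
        Complex.exp (-(2 * Real.pi * Complex.I) *
          ((∑ i : Fin n, θ.2 i * ((k i + q i : ℤ) : ℝ) : ℝ) : ℂ)) := by
    rw [← Complex.exp_nat_mul, ← Complex.exp_add, ← Complex.exp_add, ← Complex.exp_add]
    rw [show (-(2 * (Real.pi:ℂ) * Complex.I) *
          ((∑ i : Fin n, θ.2 i * (k i : ℝ) : ℝ) : ℂ)
        + ((N:ℂ) * ((Real.pi:ℂ) * Complex.I *
            ((∑ i : Fin n, (q i:ℝ) * (p i:ℝ) : ℝ) : ℂ))
          + 2 * (Real.pi:ℂ) * Complex.I * (N : ℂ) *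
            (((∑ i : Fin n, (p i:ℝ) * ((k i:ℝ) + ((j i:ℝ) - θ.1 i)/N) : ℝ) : ℂ)
              + ((∑ i : Fin n, (q i:ℝ) * (p i:ℝ) : ℝ) : ℂ) / 2)))
      = (2 * (Real.pi:ℂ) * Complex.I *
          ((((∑ i : Fin n, θ.2 i * (q i : ℝ)) - ∑ i : Fin n, (p i : ℝ) * θ.1 i : ℝ)) : ℂ)
        + -(2 * (Real.pi:ℂ) * Complex.I) *
          ((∑ i : Fin n, θ.2 i * ((k i + q i : ℤ) : ℝ) : ℝ) : ℂ))
        + ((N : ℤ) * (∑ i : Fin n, q i * p i) + (N : ℤ) * (∑ i : Fin n, p i * k i)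
            + ∑ i : Fin n, p i * j i : ℤ) * (2 * (Real.pi:ℂ) * Complex.I) from ?_]
    · rw [Complex.exp_add, Complex.exp_int_mul_two_pi_mul_I, mul_one, Complex.exp_add]
    · push_cast
      linear_combination (2 * (Real.pi:ℂ) * Complex.I) * hsum
        + (2 * (Real.pi:ℂ) * Complex.I) * hθ
  calc _ = (Complex.exp (-(2 * Real.pi * Complex.I) *
          ((∑ i : Fin n, θ.2 i * (k i : ℝ) : ℝ) : ℂ)) *
        (Complex.exp (Real.pi * Complex.I *
            ((∑ i : Fin n, (q i:ℝ) * (p i:ℝ) : ℝ) : ℂ)) ^ N *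
          Complex.exp (2 * Real.pi * Complex.I * (N : ℂ) *
            (((∑ i : Fin n, (p i:ℝ) * ((k i:ℝ) + ((j i:ℝ) - θ.1 i)/N) : ℝ) : ℂ)
              + ((∑ i : Fin n, (q i:ℝ) * (p i:ℝ) : ℝ) : ℂ) / 2)))) *
        f (fun i => ((k i + q i : ℤ):ℝ) + ((j i:ℝ) - θ.1 i)/N) := by ring
    _ = _ := by rw [key]; push_cast; ring
end

section
/- Band structure of the transfer operator on homogeneous polynomials: let E ∈ GL(n,ℝ) and k ∈ ℕ, and let L_{E,k} be the linear endomorphism of the complex vector space of homogeneous polynomials of degree k in n variables defined by (L_{E,k} p)(y) := p(E⁻¹ y). Then every eigenvalue z ∈ ℂ of L_{E,k} satisfies ‖E‖^{−k} ≤ |z| ≤ ‖E⁻¹‖^{k}. In particular, if ‖E⁻¹‖ < 1 and k ≥ 1, then every eigenvalue of L_{E,k} has modulus strictly less than 1, while for k = 0 the only eigenvalue is 1. -/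
/-!
Evaluating an eigenpolynomial `p` at real points gives a function `f` on `ℝⁿ` with
`f (E⁻¹ y) = z * f y` and, by homogeneity, `‖f y‖ ≤ C * ‖y‖ ^ k`. Iterating,
`‖z‖ ^ m * ‖f y₀‖ = ‖f (E⁻ᵐ y₀)‖ ≤ C * ‖E⁻¹‖ ^ (m * k) * ‖y₀‖ ^ k` for every `m`, which forces
`‖z‖ ≤ ‖E⁻¹‖ ^ k` once `f y₀ ≠ 0`; such a real point exists because `ℝ` is infinite. Since
`f (E y) = z⁻¹ * f y`, the same argument gives `‖z⁻¹‖ ≤ ‖E‖ ^ k`. For `k = 0`, `p` is a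
nonzero constant, hence `z = 1`.
-/

open Matrix MvPolynomial Filter Topology

theorem le_of_forall_pow_le_mul_pow {a b K : ℝ} (hb : 0 ≤ b)
    (h : ∀ m : ℕ, a ^ m ≤ K * b ^ m) : a ≤ b := by
  by_contra! hba
  have ha : 0 < a := hb.trans_lt hba
  have hlim : Tendsto (fun m : ℕ => K * (b / a) ^ m) atTop (𝓝 (K * 0)) :=
    (tendsto_pow_atTop_nhds_zero_of_lt_one (div_nonneg hb ha.le)
      ((div_lt_one ha).2 hba)).const_mul K
  have : (1 : ℝ) ≤ K * 0 := ge_of_tendsto' hlim fun m => by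
    rw [div_pow, mul_div_assoc', le_div_iff₀ (pow_pos ha m), one_mul]
    exact h m
  linarith

theorem norm_le_pow_of_comp_eq_mul {V 𝕜 : Type*} [SeminormedAddCommGroup V]
    [NormedDivisionRing 𝕜] {f : V → 𝕜} {A : V → V} {z : 𝕜} {C c : ℝ} {k : ℕ} (hc : 0 ≤ c)
    (hf : ∀ y, ‖f y‖ ≤ C * ‖y‖ ^ k) (hA : ∀ y, ‖A y‖ ≤ c * ‖y‖)
    (heig : ∀ y, f (A y) = z * f y) {y₀ : V} (hy₀ : f y₀ ≠ 0) : ‖z‖ ≤ c ^ k := by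
  have hpos : 0 < ‖f y₀‖ := norm_pos_iff.2 hy₀
  have hC : 0 ≤ C := (pos_of_mul_pos_left (hpos.trans_le (hf y₀)) (by positivity)).le
  have hiter : ∀ m, f (A^[m] y₀) = z ^ m * f y₀ := fun m => by
    rw [(Function.Semiconj.iterate_right heig m) y₀, mul_left_iterate_apply]
  have hnorm : ∀ m, ‖A^[m] y₀‖ ≤ c ^ m * ‖y₀‖ := by
    intro m
    induction m with
    | zero => simp
    | succ m ih =>
      rw [Function.iterate_succ_apply', pow_succ', mul_assoc]
      exact (hA _).trans (by gcongr)
  refine le_of_forall_pow_le_mul_pow (pow_nonneg hc k) (K := C * ‖y₀‖ ^ k / ‖f y₀‖) fun m => ?_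
  rw [div_mul_eq_mul_div, le_div_iff₀ hpos]
  calc ‖z‖ ^ m * ‖f y₀‖ = ‖f (A^[m] y₀)‖ := by rw [hiter, norm_mul, norm_pow]
    _ ≤ C * ‖A^[m] y₀‖ ^ k := hf _
    _ ≤ C * (c ^ m * ‖y₀‖) ^ k := by gcongr; exact hnorm m
    _ = C * ‖y₀‖ ^ k * (c ^ k) ^ m := by ring

theorem MvPolynomial.IsHomogeneous.norm_eval_le {σ R : Type*} [NormedCommRing R] [NormOneClass R]
    {p : MvPolynomial σ R} {k : ℕ} (hp : p.IsHomogeneous k) {x : σ → R} {r : ℝ}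
    (hx : ∀ i, ‖x i‖ ≤ r) : ‖eval x p‖ ≤ (∑ d ∈ p.support, ‖coeff d p‖) * r ^ k := by
  rw [eval_eq, Finset.sum_mul]
  refine (norm_sum_le _ _).trans (Finset.sum_le_sum fun d hd => ?_)
  have hdeg : ∑ i ∈ d.support, d i = k := by
    simp [← hp (mem_support_iff.mp hd), Finsupp.weight_apply, Finsupp.sum]
  refine (norm_mul_le _ _).trans (mul_le_mul_of_nonneg_left ?_ (norm_nonneg _))
  calc ‖∏ i ∈ d.support, x i ^ d i‖ ≤ ∏ i ∈ d.support, ‖x i‖ ^ d i :=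
        (Finset.norm_prod_le _ _).trans
          (Finset.prod_le_prod (fun _ _ => norm_nonneg _) fun i _ => norm_pow_le _ _)
    _ ≤ ∏ i ∈ d.support, r ^ d i :=
        Finset.prod_le_prod (fun _ _ => by positivity) fun i _ =>
          pow_le_pow_left₀ (norm_nonneg _) (hx i) _
    _ = r ^ k := by rw [Finset.prod_pow_eq_pow_sum, hdeg]

theorem MvPolynomial.IsHomogeneous.eval_eq_coeff_zero {σ R : Type*} [CommSemiring R]
    {p : MvPolynomial σ R} (hp : p.IsHomogeneous 0) (x : σ → R) : eval x p = coeff 0 p := by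
  rcases eq_or_ne p 0 with rfl | hp₀
  · simp
  · rw [totalDegree_eq_zero_iff_eq_C.mp (hp.totalDegree hp₀)]
    simp

theorem MvPolynomial.exists_eval_ofReal_ne_zero {σ : Type*} {p : MvPolynomial σ ℂ} (hp : p ≠ 0) :
    ∃ y : σ → ℝ, eval (fun i => (y i : ℂ)) p ≠ 0 := by
  by_contra! h
  refine hp (funext_set (fun _ => Set.range ((↑) : ℝ → ℂ))
    (fun _ => Set.infinite_range_of_injective Complex.ofReal_injective) fun x hx => ?_)
  choose y hy using fun i => hx i trivial
  obtain rfl : (fun i => (y i : ℂ)) = x := _root_.funext hy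
  rw [h y, map_zero]

theorem MvPolynomial.eval_ofReal_mulVec_of_aeval_eq_smul {σ : Type*} [Fintype σ]
    {M : Matrix σ σ ℝ} {p : MvPolynomial σ ℂ} {z : ℂ}
    (heig : aeval (fun i => ∑ j, C ((M i j : ℝ) : ℂ) * X j) p = z • p) (y : σ → ℝ) :
    eval (fun i => ((M *ᵥ y) i : ℂ)) p = z * eval (fun i => (y i : ℂ)) p := by
  have := congrArg (aeval fun i => (y i : ℂ)) heig
  rw [comp_aeval_apply, map_smul, smul_eq_mul] at this
  convert this using 2 with i
  · simp [mulVec, dotProduct]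
  · exact congrFun (aeval_eq_eval _).symm p

theorem Matrix.toEuclideanCLM_nonsing_inv_apply {ι 𝕜 : Type*} [Fintype ι] [DecidableEq ι]
    [RCLike 𝕜] {A : Matrix ι ι 𝕜} (hA : IsUnit A.det) (y : EuclideanSpace 𝕜 ι) :
    toEuclideanCLM (n := ι) (𝕜 := 𝕜) A⁻¹ (toEuclideanCLM (n := ι) (𝕜 := 𝕜) A y) = y := by
  ext i
  simp [mulVec_mulVec, nonsing_inv_mul _ hA]

/-- band structure of the transfer operator on homogeneous polynomials.
Let `E ∈ GL(n,ℝ)` and let `L_{E,k}` be the endomorphism `p(y) ↦ p(E⁻¹y)` of the space of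
complex homogeneous polynomials of degree `k` in `n` variables (realized as the substitution
`X i ↦ Σ_j (E⁻¹)_{ij} X j`).  Every eigenvalue `z` of `L_{E,k}` (i.e. `L_{E,k} p = z • p` for
some nonzero homogeneous `p` of degree `k`) satisfies `‖E‖^{−k} ≤ |z| ≤ ‖E⁻¹‖^k`, the norms
being operator norms with respect to the Euclidean norm on `ℝⁿ`.  In particular, if
`‖E⁻¹‖ < 1` and `k ≥ 1` then `|z| < 1`, while for `k = 0` the only eigenvalue is `1`. -/
theorem transfer_operator_band_structure (n k : ℕ) (E : Matrix (Fin n) (Fin n) ℝ)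
    (hE : IsUnit E.det) (z : ℂ) (p : MvPolynomial (Fin n) ℂ) (hp : p ≠ 0)
    (hhom : p.IsHomogeneous k)
    (heig : MvPolynomial.aeval
        (fun i => ∑ j : Fin n, MvPolynomial.C (((E⁻¹ : Matrix (Fin n) (Fin n) ℝ) i j : ℝ) : ℂ)
          * (MvPolynomial.X j : MvPolynomial (Fin n) ℂ)) p = z • p) :
    ‖Matrix.toEuclideanCLM (𝕜 := ℝ) E‖ ^ (-(k : ℤ)) ≤ ‖z‖ ∧
    ‖z‖ ≤ ‖Matrix.toEuclideanCLM (𝕜 := ℝ) E⁻¹‖ ^ k ∧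
    (‖Matrix.toEuclideanCLM (𝕜 := ℝ) E⁻¹‖ < 1 → 1 ≤ k → ‖z‖ < 1) ∧
    (k = 0 → z = 1) := by
  set f : EuclideanSpace ℝ (Fin n) → ℂ := fun y => eval (fun i => (y i : ℂ)) p with hf_def
  have hf : ∀ y, ‖f y‖ ≤ (∑ d ∈ p.support, ‖coeff d p‖) * ‖y‖ ^ k := fun y =>
    hhom.norm_eval_le fun i => by simpa using PiLp.norm_apply_le y i
  have hinv : ∀ y, f (toEuclideanCLM (𝕜 := ℝ) E⁻¹ y) = z * f y := fun y =>
    eval_ofReal_mulVec_of_aeval_eq_smul heig y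
  have hfwd : ∀ y, f y = z * f (toEuclideanCLM (𝕜 := ℝ) E y) := fun y => by
    rw [← hinv, toEuclideanCLM_nonsing_inv_apply hE]
  obtain ⟨y₀, hy₀⟩ : ∃ y, f y ≠ 0 :=
    let ⟨y, hy⟩ := exists_eval_ofReal_ne_zero hp
    ⟨WithLp.toLp 2 y, hy⟩
  have hz : z ≠ 0 := by
    rintro rfl
    exact hy₀ (by rw [hfwd, zero_mul])
  have hupper : ‖z‖ ≤ ‖toEuclideanCLM (𝕜 := ℝ) E⁻¹‖ ^ k :=
    norm_le_pow_of_comp_eq_mul (norm_nonneg _) hf (ContinuousLinearMap.le_opNorm _) hinv hy₀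
  have hlower : ‖z⁻¹‖ ≤ ‖toEuclideanCLM (𝕜 := ℝ) E‖ ^ k :=
    norm_le_pow_of_comp_eq_mul (norm_nonneg _) hf (ContinuousLinearMap.le_opNorm _)
      (fun y => by rw [hfwd y, inv_mul_cancel_left₀ hz]) hy₀
  refine ⟨?_, hupper, fun h hk => hupper.trans_lt (pow_lt_one₀ (norm_nonneg _) h (by omega)),
    fun hk => ?_⟩
  · rw [_root_.zpow_neg, zpow_natCast]
    exact inv_le_of_inv_le₀ (norm_pos_iff.2 hz) (by rwa [← norm_inv])
  · subst hk
    have := hinv y₀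
    simp only [hf_def, hhom.eval_eq_coeff_zero] at this hy₀
    exact (mul_eq_right₀ hy₀).mp this.symm
end
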